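/- arXiv:1606.07231 — 5 statements merged into one kernel-verified Lean document; each statement's English description precedes it below -/
import Mathlib

section
/- The ℓ_{2,1} mixed norm of a matrix X ∈ ℂ^{K×N} (the sum of the ℓ2 norms of its rows) equals the minimum of (1/2)(‖Γ‖_F² + ‖G‖_F²) over all diagonal matrices Γ ∈ ℂ^{K×K} and matrices G ∈ ℂ^{K×N} with X = Γ·G. -/
open scoped Matrix

/-- Squared Frobenius norm of a complex matrix. -/
noncomputable def frobSq {m n : Type*} [Fintype m] [Fintype n] (X : Matrix m n ℂ) : ℝ :=
  ∑ i, ∑ j, ‖X i j‖ ^ 2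

/-- The ℓ_{2,1} mixed norm of a matrix: sum of ℓ2 norms of its rows. -/
noncomputable def l21Norm {K N : ℕ} (X : Matrix (Fin K) (Fin N) ℂ) : ℝ :=
  ∑ k, Real.sqrt (∑ n, ‖X k n‖ ^ 2)

/-!
Row by row, `X = Γ G` with `Γ` diagonal means `x_k = γ_k g_k`, so
`‖x_k‖₂ = |γ_k| ‖g_k‖₂ ≤ (|γ_k|² + ‖g_k‖₂²) / 2` by AM-GM; summing over `k` bounds
`‖X‖_{2,1}` by the objective. Equality is attained by balancing every row:
`γ_k = √‖x_k‖₂` and `g_k = x_k / γ_k`.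
-/

open Matrix Finset

section Frobenius

variable {m n : Type*} [Fintype m] [Fintype n]

lemma sum_norm_diag_sq_le_frobSq (A : Matrix m m ℂ) : ∑ i, ‖A i i‖ ^ 2 ≤ frobSq A :=
  sum_le_sum fun i _ => single_le_sum (fun j _ => sq_nonneg ‖A i j‖) (mem_univ i)

lemma frobSq_diagonal [DecidableEq m] (d : m → ℂ) : frobSq (diagonal d) = ∑ i, ‖d i‖ ^ 2 := by
  refine sum_congr rfl fun i _ => ?_
  rw [sum_eq_single i (fun j _ hj => by simp [diagonal_apply_ne' _ hj]) (by simp)]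
  simp

end Frobenius

section Rows

variable {ι : Type*} [Fintype ι]

lemma sqrt_sum_norm_mul_sq_le (a : ℂ) (g : ι → ℂ) :
    √(∑ n, ‖a * g n‖ ^ 2) ≤ (‖a‖ ^ 2 + ∑ n, ‖g n‖ ^ 2) / 2 := by
  have hg : 0 ≤ ∑ n, ‖g n‖ ^ 2 := sum_nonneg fun n _ => sq_nonneg _
  simp_rw [norm_mul, mul_pow, ← mul_sum]
  rw [Real.sqrt_mul (sq_nonneg _), Real.sqrt_sq (norm_nonneg _)]
  have := two_mul_le_add_sq ‖a‖ √(∑ n, ‖g n‖ ^ 2)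
  rw [Real.sq_sqrt hg] at this
  linarith

lemma exists_balanced_factor (x : ι → ℂ) :
    ∃ (a : ℂ) (g : ι → ℂ), (∀ n, x n = a * g n) ∧
      ‖a‖ ^ 2 = √(∑ n, ‖x n‖ ^ 2) ∧ ∑ n, ‖g n‖ ^ 2 = √(∑ n, ‖x n‖ ^ 2) := by
  by_cases hx : x = 0
  · exact ⟨0, 0, by simp [hx], by simp [hx], by simp [hx]⟩
  set S := ∑ n, ‖x n‖ ^ 2
  have hS : 0 < S := by
    obtain ⟨n, hn⟩ := Function.ne_iff.mp hx
    exact sum_pos' (fun n _ => sq_nonneg _) ⟨n, mem_univ n, pow_pos (norm_pos_iff.mpr hn) 2⟩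
  set a : ℂ := ((√(√S) : ℝ) : ℂ)
  have ha : ‖a‖ ^ 2 = √S := by
    rw [Complex.norm_real, Real.norm_of_nonneg (Real.sqrt_nonneg _),
      Real.sq_sqrt (Real.sqrt_nonneg _)]
  have ha0 : a ≠ 0 := Complex.ofReal_ne_zero.mpr (Real.sqrt_pos.mpr (Real.sqrt_pos.mpr hS)).ne'
  refine ⟨a, fun n => x n / a, fun n => (mul_div_cancel₀ _ ha0).symm, ha, ?_⟩
  simp_rw [norm_div, div_pow, ha, ← sum_div]
  exact Real.div_sqrt

end Rows

/-- ‖X‖_{2,1} equals the minimum of (1/2)(‖Γ‖_F² + ‖G‖_F²) over all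
diagonal Γ ∈ ℂ^{K×K} and G ∈ ℂ^{K×N} with X = Γ·G. -/
theorem l21_eq_min_diag_factorization (K N : ℕ) (X : Matrix (Fin K) (Fin N) ℂ) :
    IsLeast { r : ℝ | ∃ (Γ : Matrix (Fin K) (Fin K) ℂ) (G : Matrix (Fin K) (Fin N) ℂ),
      Γ.IsDiag ∧ X = Γ * G ∧ r = (1/2) * (frobSq Γ + frobSq G) } (l21Norm X) := by
  constructor
  · choose a g hx ha hg using fun k => exists_balanced_factor (X k)
    refine ⟨diagonal a, of g, isDiag_diagonal a, ?_, ?_⟩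
    · ext k n
      simp [diagonal_mul, hx]
    · rw [frobSq_diagonal]
      simp only [frobSq, of_apply, ha, hg, l21Norm]
      ring
  · rintro _ ⟨Γ, G, hΓ, rfl, rfl⟩
    have hrow (k : Fin K) (n : Fin N) : (Γ * G) k n = Γ k k * G k n := by
      conv_lhs => rw [← hΓ.diagonal_diag, diagonal_mul, diag_apply]
    calc l21Norm (Γ * G) = ∑ k, √(∑ n, ‖Γ k k * G k n‖ ^ 2) := by simp only [l21Norm, hrow]
      _ ≤ ∑ k, (‖Γ k k‖ ^ 2 + ∑ n, ‖G k n‖ ^ 2) / 2 :=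
          sum_le_sum fun k _ => sqrt_sum_norm_mul_sq_le _ _
      _ = (∑ k, ‖Γ k k‖ ^ 2 + frobSq G) / 2 := by rw [← sum_div, sum_add_distrib, frobSq]
      _ ≤ (1/2) * (frobSq Γ + frobSq G) := by linarith [sum_norm_diag_sq_le_frobSq Γ]
end

section
/- The SPARROW problem min over nonnegative diagonal S of Tr((A S Aᴴ + λ I_M)⁻¹ R̂) + Tr(S) has the same optimal value as the semidefinite program min over (S nonnegative diagonal, U_N Hermitian N×N) of (1/N)Tr(U_N) + Tr(S) subject to [[U_N, Yᴴ],[Y, A S Aᴴ + λ I_M]] ⪰ 0. -/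
/-!
For nonnegative `s` the matrix `Q = A diag(s) Aᴴ + λ I` is positive definite, so by the Schur
complement the block matrix `[[U, Yᴴ], [Y, Q]]` is positive semidefinite exactly when
`U - Yᴴ Q⁻¹ Y` is. Hence for fixed `s` the SDP objective is minimised by `U = Yᴴ Q⁻¹ Y`, and there
`(1/N) Tr(Yᴴ Q⁻¹ Y) = Tr(Q⁻¹ R̂)` by cyclicity of the trace, which is the SPARROW objective.
-/

open scoped Matrix ComplexOrder

/-- The SPARROW objective Tr((A S Aᴴ + λ I_M)⁻¹ R̂) + Tr(S), with S = diag(s). -/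
noncomputable def sparrowObj {M K : ℕ} (A : Matrix (Fin M) (Fin K) ℂ) (lam : ℝ)
    (R : Matrix (Fin M) (Fin M) ℂ) (s : Fin K → ℝ) : ℝ :=
  (((A * Matrix.diagonal (fun k => (s k : ℂ)) * Aᴴ
      + (lam : ℂ) • (1 : Matrix (Fin M) (Fin M) ℂ))⁻¹ * R).trace).re + ∑ k, s k

namespace Matrix

variable {m n : Type*} [Fintype m] [Fintype n]

lemma PosSemidef.re_trace_nonneg {P : Matrix n n ℂ} (hP : P.PosSemidef) : 0 ≤ P.trace.re :=
  (Complex.nonneg_iff.mp hP.trace_nonneg).1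

lemma inv_natCast_mul_re_trace_conjTranspose_mul (N : ℕ) (X : Matrix m m ℂ) (Y : Matrix m n ℂ) :
    1 / (N : ℝ) * (Yᴴ * (X * Y)).trace.re = (X * ((N : ℂ)⁻¹ • (Y * Yᴴ))).trace.re := by
  rw [trace_mul_comm Yᴴ, Matrix.mul_assoc, Matrix.mul_smul, trace_smul, smul_eq_mul, one_div,
    ← Complex.ofReal_natCast, ← Complex.ofReal_inv, Complex.re_ofReal_mul]

variable [DecidableEq m]

lemma posDef_mul_diagonal_mul_conjTranspose_add_smul_one [DecidableEq n] (A : Matrix m n ℂ)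
    {s : n → ℝ} (hs : ∀ k, 0 ≤ s k) {lam : ℝ} (hlam : 0 < lam) :
    (A * diagonal (fun k => (s k : ℂ)) * Aᴴ + (lam : ℂ) • 1).PosDef :=
  PosDef.posSemidef_add
    ((PosSemidef.diagonal fun k => Complex.zero_le_real.mpr (hs k)).mul_mul_conjTranspose_same A)
    (PosDef.one.smul (Complex.zero_lt_real.mpr hlam))

namespace PosDef

variable {Q : Matrix m m ℂ} (hQ : Q.PosDef)
include hQ

lemma posSemidef_fromBlocks_iff (U : Matrix n n ℂ) (B : Matrix m n ℂ) :
    (fromBlocks U Bᴴ B Q).PosSemidef ↔ (U - Bᴴ * (Q⁻¹ * B)).PosSemidef := by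
  have := hQ.isUnit.invertible
  simpa [Matrix.mul_assoc] using fromBlocks₂₂ U Bᴴ hQ

lemma posSemidef_fromBlocks_conjTranspose_mul_inv_mul (B : Matrix m n ℂ) :
    (fromBlocks (Bᴴ * (Q⁻¹ * B)) Bᴴ B Q).PosSemidef := by
  rw [hQ.posSemidef_fromBlocks_iff, sub_self]
  exact .zero

lemma re_trace_le_of_posSemidef_fromBlocks {U : Matrix n n ℂ} {B : Matrix m n ℂ}
    (h : (fromBlocks U Bᴴ B Q).PosSemidef) : (Bᴴ * (Q⁻¹ * B)).trace.re ≤ U.trace.re := by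
  have := ((hQ.posSemidef_fromBlocks_iff U B).mp h).re_trace_nonneg
  rw [trace_sub, Complex.sub_re] at this
  linarith

end PosDef

end Matrix

lemma sparrowObj_sampleCov_eq {M K N : ℕ} (A : Matrix (Fin M) (Fin K) ℂ)
    (Y : Matrix (Fin M) (Fin N) ℂ) (lam : ℝ) (s : Fin K → ℝ) :
    sparrowObj A lam ((N : ℂ)⁻¹ • (Y * Yᴴ)) s =
      1 / (N : ℝ) * (Yᴴ * ((A * Matrix.diagonal (fun k => (s k : ℂ)) * Aᴴ
        + (lam : ℂ) • 1)⁻¹ * Y)).trace.re + ∑ k, s k := by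
  rw [sparrowObj, Matrix.inv_natCast_mul_re_trace_conjTranspose_mul]

theorem sparrow_sdp_equivalence_general (M K N : ℕ)
    (A : Matrix (Fin M) (Fin K) ℂ) (Y : Matrix (Fin M) (Fin N) ℂ)
    (lam : ℝ) (hlam : 0 < lam) :
    sInf {r : ℝ | ∃ s : Fin K → ℝ, (∀ k, 0 ≤ s k) ∧
        r = sparrowObj A lam (((N : ℂ))⁻¹ • (Y * Yᴴ)) s} =
      sInf {r : ℝ | ∃ (s : Fin K → ℝ) (U : Matrix (Fin N) (Fin N) ℂ),
        (∀ k, 0 ≤ s k) ∧ U.IsHermitian ∧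
        (Matrix.fromBlocks U Yᴴ Y
          (A * Matrix.diagonal (fun k => (s k : ℂ)) * Aᴴ
            + (lam : ℂ) • (1 : Matrix (Fin M) (Fin M) ℂ))).PosSemidef ∧
        r = (1 / (N : ℝ)) * ((U.trace).re) + ∑ k, s k} ∧
    ∀ s : Fin K → ℝ, (∀ k, 0 ≤ s k) →
      (Matrix.fromBlocks
          (Yᴴ * ((A * Matrix.diagonal (fun k => (s k : ℂ)) * Aᴴ
            + (lam : ℂ) • (1 : Matrix (Fin M) (Fin M) ℂ))⁻¹ * Y)) Yᴴ Y
          (A * Matrix.diagonal (fun k => (s k : ℂ)) * Aᴴ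
            + (lam : ℂ) • (1 : Matrix (Fin M) (Fin M) ℂ))).PosSemidef ∧
      (1 / (N : ℝ)) * (((Yᴴ * ((A * Matrix.diagonal (fun k => (s k : ℂ)) * Aᴴ
            + (lam : ℂ) • (1 : Matrix (Fin M) (Fin M) ℂ))⁻¹ * Y)).trace).re) + ∑ k, s k =
        sparrowObj A lam (((N : ℂ))⁻¹ • (Y * Yᴴ)) s := by
  have hQ (s : Fin K → ℝ) (hs : ∀ k, 0 ≤ s k) :=
    Matrix.posDef_mul_diagonal_mul_conjTranspose_add_smul_one A hs hlam
  refine ⟨csInf_eq_csInf_of_forall_exists_le ?_ ?_, fun s hs =>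
    ⟨(hQ s hs).posSemidef_fromBlocks_conjTranspose_mul_inv_mul Y,
      (sparrowObj_sampleCov_eq ..).symm⟩⟩
  · rintro _ ⟨s, hs, rfl⟩
    have hU : (Yᴴ * ((A * Matrix.diagonal (fun k => (s k : ℂ)) * Aᴴ
        + (lam : ℂ) • 1)⁻¹ * Y)).IsHermitian := by
      simpa only [Matrix.mul_assoc] using
        Matrix.isHermitian_conjTranspose_mul_mul Y (hQ s hs).isHermitian.inv
    exact ⟨_, ⟨s, _, hs, hU, (hQ s hs).posSemidef_fromBlocks_conjTranspose_mul_inv_mul Y, rfl⟩,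
      (sparrowObj_sampleCov_eq ..).ge⟩
  · rintro _ ⟨s, U, hs, -, hblock, rfl⟩
    refine ⟨_, ⟨s, hs, rfl⟩, ?_⟩
    rw [sparrowObj_sampleCov_eq]
    gcongr (1 / (N : ℝ)) * ?_ + _
    exact (hQ s hs).re_trace_le_of_posSemidef_fromBlocks hblock

/-- The SPARROW problem has the same optimal value as the SDP
min (1/N)Tr(U_N) + Tr(S) s.t. [[U_N, Yᴴ],[Y, A S Aᴴ + λ I_M]] ⪰ 0, with the explicit
correspondence of optimal points via U_N = Yᴴ(A S Aᴴ + λ I_M)⁻¹ Y. -/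
theorem sparrow_sdp_equivalence (M K N : ℕ) (hN : 0 < N)
    (A : Matrix (Fin M) (Fin K) ℂ) (Y : Matrix (Fin M) (Fin N) ℂ)
    (lam : ℝ) (hlam : 0 < lam) :
    sInf {r : ℝ | ∃ s : Fin K → ℝ, (∀ k, 0 ≤ s k) ∧
        r = sparrowObj A lam (((N : ℂ))⁻¹ • (Y * Yᴴ)) s} =
      sInf {r : ℝ | ∃ (s : Fin K → ℝ) (U : Matrix (Fin N) (Fin N) ℂ),
        (∀ k, 0 ≤ s k) ∧ U.IsHermitian ∧
        (Matrix.fromBlocks U Yᴴ Y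
          (A * Matrix.diagonal (fun k => (s k : ℂ)) * Aᴴ
            + (lam : ℂ) • (1 : Matrix (Fin M) (Fin M) ℂ))).PosSemidef ∧
        r = (1 / (N : ℝ)) * ((U.trace).re) + ∑ k, s k} ∧
    ∀ s : Fin K → ℝ, (∀ k, 0 ≤ s k) →
      (Matrix.fromBlocks
          (Yᴴ * ((A * Matrix.diagonal (fun k => (s k : ℂ)) * Aᴴ
            + (lam : ℂ) • (1 : Matrix (Fin M) (Fin M) ℂ))⁻¹ * Y)) Yᴴ Y
          (A * Matrix.diagonal (fun k => (s k : ℂ)) * Aᴴ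
            + (lam : ℂ) • (1 : Matrix (Fin M) (Fin M) ℂ))).PosSemidef ∧
      (1 / (N : ℝ)) * (((Yᴴ * ((A * Matrix.diagonal (fun k => (s k : ℂ)) * Aᴴ
            + (lam : ℂ) • (1 : Matrix (Fin M) (Fin M) ℂ))⁻¹ * Y)).trace).re) + ∑ k, s k =
        sparrowObj A lam (((N : ℂ))⁻¹ • (Y * Yᴴ)) s :=
  sparrow_sdp_equivalence_general M K N A Y lam hlam
end

section
/- The SPARROW problem min over nonnegative diagonal S of Tr((A S Aᴴ + λ I_M)⁻¹ R̂) + Tr(S) has the same optimal value as the semidefinite program min over (S nonnegative diagonal, U_M Hermitian M×M) of Tr(U_M R̂) + Tr(S) subject to [[U_M, I_M],[I_M, A S Aᴴ + λ I_M]] ⪰ 0. -/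
/-!
For `S ⪰ 0` the matrix `B = A S Aᴴ + λ I` is positive definite, so by the Schur complement
the block constraint of the SDP says exactly `U ⪰ B⁻¹`. As `R̂ ⪰ 0`, the map `U ↦ Tr(U R̂)` is
monotone, so every SDP value is bounded below by the SPARROW value at the same `S`, and that
SPARROW value is itself attained by the SDP at `U = B⁻¹`. Hence the two sets of values have the
same infimum.
-/

open scoped Matrix ComplexOrder

namespace Matrix

variable {m n 𝕜 : Type*} [Fintype n] [RCLike 𝕜]

open scoped MatrixOrder in
theorem PosSemidef.trace_mul_nonneg {P Q : Matrix n n 𝕜} (hP : P.PosSemidef)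
    (hQ : Q.PosSemidef) : 0 ≤ (P * Q).trace := by
  classical
  obtain ⟨B, rfl⟩ := CStarAlgebra.nonneg_iff_eq_star_mul_self.mp hP.nonneg
  rw [star_eq_conjTranspose, Matrix.mul_assoc, trace_mul_comm]
  exact (hQ.mul_mul_conjTranspose_same B).trace_nonneg

theorem PosSemidef.trace_mul_le_trace_mul_of_sub {U V R : Matrix n n 𝕜}
    (hUV : (U - V).PosSemidef) (hR : R.PosSemidef) : (V * R).trace ≤ (U * R).trace := by
  simpa only [sub_mul, trace_sub, sub_nonneg] using hUV.trace_mul_nonneg hR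

theorem PosDef.fromBlocks_one_one_posSemidef_iff [DecidableEq n] {B : Matrix n n 𝕜}
    (hB : B.PosDef) (U : Matrix n n 𝕜) :
    (fromBlocks U 1 1 B).PosSemidef ↔ (U - B⁻¹).PosSemidef := by
  have : Invertible B := hB.isUnit.invertible
  simpa using PosDef.fromBlocks₂₂ U 1 hB

theorem PosSemidef.mul_mul_conjTranspose_add_smul_one_posDef [Fintype m] [DecidableEq m]
    {D : Matrix n n 𝕜} (hD : D.PosSemidef) (A : Matrix m n 𝕜) {c : 𝕜} (hc : 0 < c) :
    (A * D * Aᴴ + c • 1).PosDef :=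
  (PosDef.one.smul hc).posSemidef_add (hD.mul_mul_conjTranspose_same A)

end Matrix

/-- The SPARROW problem has the same optimal value as the SDP
min Tr(U_M R̂) + Tr(S) s.t. [[U_M, I_M],[I_M, A S Aᴴ + λ I_M]] ⪰ 0. -/
theorem sparrow_sdp_equivalence_covariance (M K : ℕ)
    (A : Matrix (Fin M) (Fin K) ℂ) (R : Matrix (Fin M) (Fin M) ℂ) (hR : R.PosSemidef)
    (lam : ℝ) (hlam : 0 < lam) :
    sInf {r : ℝ | ∃ s : Fin K → ℝ, (∀ k, 0 ≤ s k) ∧ r = sparrowObj A lam R s} =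
      sInf {r : ℝ | ∃ (s : Fin K → ℝ) (U : Matrix (Fin M) (Fin M) ℂ),
        (∀ k, 0 ≤ s k) ∧ U.IsHermitian ∧
        (Matrix.fromBlocks U (1 : Matrix (Fin M) (Fin M) ℂ) (1 : Matrix (Fin M) (Fin M) ℂ)
          (A * Matrix.diagonal (fun k => (s k : ℂ)) * Aᴴ
            + (lam : ℂ) • (1 : Matrix (Fin M) (Fin M) ℂ))).PosSemidef ∧
        r = ((U * R).trace).re + ∑ k, s k} := by
  have hB (s : Fin K → ℝ) (hs : ∀ k, 0 ≤ s k) :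
      (A * Matrix.diagonal (fun k => (s k : ℂ)) * Aᴴ + (lam : ℂ) • 1).PosDef :=
    Matrix.PosSemidef.mul_mul_conjTranspose_add_smul_one_posDef
      (.diagonal fun k => Complex.zero_le_real.mpr (hs k)) A (Complex.zero_lt_real.mpr hlam)
  apply csInf_eq_csInf_of_forall_exists_le
  · rintro _ ⟨s, hs, rfl⟩
    refine ⟨_, ⟨s, _, hs, (hB s hs).inv.isHermitian,
      ((hB s hs).fromBlocks_one_one_posSemidef_iff _).mpr ?_, rfl⟩, le_rfl⟩
    rw [sub_self]
    exact .zero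
  · rintro _ ⟨s, U, hs, -, hU, rfl⟩
    have hle := Matrix.PosSemidef.trace_mul_le_trace_mul_of_sub
      (((hB s hs).fromBlocks_one_one_posSemidef_iff U).mp hU) hR
    exact ⟨_, ⟨s, hs, rfl⟩, add_le_add_left (Complex.le_def.mp hle).1 _⟩
end

section
/- Let Q ∈ ℂ^{M×M} be Hermitian positive definite, R̂ Hermitian positive semidefinite, a ∈ ℂ^M nonzero, and s₀ ≥ 0. The minimizer over d ≥ −s₀ of g(d) = −d·(aᴴ Q⁻¹ R̂ Q⁻¹ a)/(1 + d·aᴴ Q⁻¹ a) + d is d* = max( (√(aᴴ Q⁻¹ R̂ Q⁻¹ a) − 1)/(aᴴ Q⁻¹ a), −s₀ ). -/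
open scoped Matrix ComplexOrder

/-!
Substituting `u = 1 + d β` turns the objective into `g d = (u + α / u - (1 + α)) / β`, and the
constraint `d ≥ -s₀` into `u ≥ 1 - s₀ β > 0`. On `u > 0` the map `u ↦ u + α / u` decreases up to
`√α`, where it attains its AM-GM minimum `2 √α`, and increases afterwards; so on `[u₀, ∞)` it is
minimised at `max √α u₀`, which corresponds to `d* = max ((√α - 1) / β) (-s₀)`.
-/

lemma Matrix.PosSemidef.mul_mul_of_isHermitian {n 𝕜 : Type*} [Fintype n] [RCLike 𝕜]
    {A B : Matrix n n 𝕜} (hA : A.PosSemidef) (hB : B.IsHermitian) : (B * A * B).PosSemidef := by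
  simpa only [hB.eq] using hA.mul_mul_conjTranspose_same B

namespace Real

lemma two_mul_sqrt_le_add_div {α u : ℝ} (hα : 0 ≤ α) (hu : 0 < u) :
    2 * √α ≤ u + α / u := by
  have hsq : u + α / u - 2 * √α = (u - √α) ^ 2 / u := by
    field_simp
    nlinarith [sq_sqrt hα]
  linarith [show 0 ≤ (u - √α) ^ 2 / u by positivity]

lemma add_div_le_add_div_of_le_mul {α u v : ℝ} (hu : 0 < u) (huv : u ≤ v) (h : α ≤ u * v) :
    u + α / u ≤ v + α / v := by
  have hv : 0 < v := hu.trans_le huv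
  have hdiff : v + α / v - (u + α / u) = (v - u) * (u * v - α) / (u * v) := by
    field_simp
    ring
  have : 0 ≤ (v - u) * (u * v - α) / (u * v) :=
    div_nonneg (mul_nonneg (by linarith) (by linarith)) (by positivity)
  linarith

lemma isMinOn_add_div_Ici {α u₀ : ℝ} (hα : 0 ≤ α) (hu₀ : 0 < u₀) :
    IsMinOn (fun u => u + α / u) (Set.Ici u₀) (max √α u₀) := by
  refine isMinOn_iff.mpr fun u (hu : u₀ ≤ u) => ?_
  rcases le_total u₀ √α with hle | hlt
  · rw [max_eq_left hle, div_sqrt]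
    linarith [two_mul_sqrt_le_add_div hα (hu₀.trans_le hu)]
  · rw [max_eq_right hlt]
    refine add_div_le_add_div_of_le_mul hu₀ hu ?_
    calc α = √α * √α := (mul_self_sqrt hα).symm
      _ ≤ u₀ * u := mul_le_mul hlt (hlt.trans hu) (sqrt_nonneg α) hu₀.le

end Real

lemma neg_mul_div_one_add_mul_add_eq {α β d : ℝ} (hβ : β ≠ 0) (hd : 1 + d * β ≠ 0) :
    -(d * α) / (1 + d * β) + d = ((1 + d * β) + α / (1 + d * β) - (1 + α)) / β := by
  field_simp
  ring

lemma isMinOn_neg_mul_div_one_add_mul_add {α β s₀ : ℝ} (hα : 0 ≤ α) (hβ : 0 < β)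
    (hs₀ : s₀ * β < 1) :
    IsMinOn (fun d => -(d * α) / (1 + d * β) + d) (Set.Ici (-s₀))
      (max ((√α - 1) / β) (-s₀)) := by
  have hu₀ : 0 < 1 - s₀ * β := by linarith
  have hpos : ∀ d, -s₀ ≤ d → 0 < 1 + d * β := fun d hd => by nlinarith
  have hstar : 1 + max ((√α - 1) / β) (-s₀) * β = max √α (1 - s₀ * β) := by
    rw [max_mul_of_nonneg _ _ hβ.le, div_mul_cancel₀ _ hβ.ne', ← max_add_add_left]
    ring_nf
  refine isMinOn_iff.mpr fun d (hd : -s₀ ≤ d) => ?_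
  have hmin := isMinOn_iff.mp (Real.isMinOn_add_div_Ici hα hu₀) (1 + d * β)
    (show 1 - s₀ * β ≤ 1 + d * β by nlinarith)
  rw [← hstar] at hmin
  rw [neg_mul_div_one_add_mul_add_eq hβ.ne' (hpos _ (le_max_right _ _)).ne',
    neg_mul_div_one_add_mul_add_eq hβ.ne' (hpos d hd).ne']
  exact div_le_div_of_nonneg_right (sub_le_sub_right hmin _) hβ.le

theorem coordinate_descent_step_general (M : ℕ)
    (Q : Matrix (Fin M) (Fin M) ℂ) (hQ : Q.PosDef)
    (R : Matrix (Fin M) (Fin M) ℂ) (hR : R.PosSemidef)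
    (a : Fin M → ℂ) (ha : a ≠ 0) (s0 : ℝ)
    (hpole : s0 < 1 / (star a ⬝ᵥ (Q⁻¹ *ᵥ a)).re) :
    let β : ℝ := (star a ⬝ᵥ (Q⁻¹ *ᵥ a)).re
    let α : ℝ := (star a ⬝ᵥ ((Q⁻¹ * R * Q⁻¹) *ᵥ a)).re
    let g : ℝ → ℝ := fun d => -(d * α) / (1 + d * β) + d
    let dstar : ℝ := max ((Real.sqrt α - 1) / β) (-s0)
    (-s0 ≤ dstar) ∧ ∀ d : ℝ, -s0 ≤ d → g dstar ≤ g d := by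
  intro β α g dstar
  have hβ : 0 < β := hQ.inv.re_dotProduct_pos ha
  have hα : 0 ≤ α := (hR.mul_mul_of_isHermitian hQ.inv.isHermitian).re_dotProduct_nonneg a
  have hs0β : s0 * β < 1 := (lt_div_iff₀ hβ).mp hpole
  exact ⟨le_max_right _ _, isMinOn_iff.mp (isMinOn_neg_mul_div_one_add_mul_add hα hβ hs0β)⟩

/-- The minimizer over d ≥ −s₀ of
g(d) = −d·(aᴴQ⁻¹R̂Q⁻¹a)/(1 + d·aᴴQ⁻¹a) + d is
d* = max((√(aᴴQ⁻¹R̂Q⁻¹a) − 1)/(aᴴQ⁻¹a), −s₀), where the feasible set lies strictly to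
the right of the pole −1/(aᴴQ⁻¹a). -/
theorem coordinate_descent_step (M : ℕ)
    (Q : Matrix (Fin M) (Fin M) ℂ) (hQ : Q.PosDef)
    (R : Matrix (Fin M) (Fin M) ℂ) (hR : R.PosSemidef)
    (a : Fin M → ℂ) (ha : a ≠ 0) (s0 : ℝ) (hs0 : 0 ≤ s0)
    (hpole : s0 < 1 / (star a ⬝ᵥ (Q⁻¹ *ᵥ a)).re) :
    let β : ℝ := (star a ⬝ᵥ (Q⁻¹ *ᵥ a)).re
    let α : ℝ := (star a ⬝ᵥ ((Q⁻¹ * R * Q⁻¹) *ᵥ a)).re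
    let g : ℝ → ℝ := fun d => -(d * α) / (1 + d * β) + d
    let dstar : ℝ := max ((Real.sqrt α - 1) / β) (-s0)
    (-s0 ≤ dstar) ∧ ∀ d : ℝ, -s0 ≤ d → g dstar ≤ g d :=
  coordinate_descent_step_general M Q hQ R hR a ha s0 hpole
end

section
/- The gridless SPARROW SDP (minimize (1/N)Tr(U_N) + (1/M)Tr(Toep(u)) subject to [[U_N, Yᴴ],[Y, Toep(u) + λ I_M]] ⪰ 0 and Toep(u) ⪰ 0) and the MMV atomic-norm SDP (minimize (1/2)‖Y − Y₀‖_F² + (λ√N/2)(Tr(V_N) + (1/M)Tr(Toep(v))) subject to [[V_N, Y₀ᴴ],[Y₀, Toep(v)]] ⪰ 0 and Toep(v) ⪰ 0) are equivalent: after scaling the SPARROW objective by λN/2, both problems have the same optimal value, and optimal solutions are related by u* = v*/√N. -/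
open scoped Matrix ComplexOrder

/-- Hermitian Toeplitz matrix with first column u. -/
noncomputable def Toep {M : ℕ} (u : Fin M → ℂ) : Matrix (Fin M) (Fin M) ℂ :=
  Matrix.of fun i j =>
    if (j : ℕ) ≤ (i : ℕ) then
      u ⟨(i : ℕ) - (j : ℕ), lt_of_le_of_lt (Nat.sub_le _ _) i.isLt⟩
    else
      star (u ⟨(j : ℕ) - (i : ℕ), lt_of_le_of_lt (Nat.sub_le _ _) j.isLt⟩)

/-- The gridless SPARROW objective, scaled by λN/2. -/
noncomputable def glSparrowObj {M N : ℕ} (lam : ℝ)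
    (u : Fin M → ℂ) (U : Matrix (Fin N) (Fin N) ℂ) : ℝ :=
  (lam * N / 2) * ((1 / (N : ℝ)) * (U.trace).re + (1 / (M : ℝ)) * ((Toep u).trace).re)

/-- Feasibility for the gridless SPARROW SDP. -/
def glSparrowFeas {M N : ℕ} (Y : Matrix (Fin M) (Fin N) ℂ) (lam : ℝ)
    (u : Fin M → ℂ) (U : Matrix (Fin N) (Fin N) ℂ) : Prop :=
  U.IsHermitian ∧
  (Matrix.fromBlocks U Yᴴ Y (Toep u + (lam : ℂ) • (1 : Matrix (Fin M) (Fin M) ℂ))).PosSemidef ∧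
  (Toep u).PosSemidef

/-- The MMV atomic-norm SDP objective. -/
noncomputable def anmObj {M N : ℕ} (Y : Matrix (Fin M) (Fin N) ℂ) (lam : ℝ)
    (v : Fin M → ℂ) (V : Matrix (Fin N) (Fin N) ℂ) (Y0 : Matrix (Fin M) (Fin N) ℂ) : ℝ :=
  (1 / 2) * frobSq (Y - Y0) +
    (lam * Real.sqrt N / 2) * ((V.trace).re + (1 / (M : ℝ)) * ((Toep v).trace).re)

/-- Feasibility for the MMV atomic-norm SDP. -/
def anmFeas {M N : ℕ} (v : Fin M → ℂ) (V : Matrix (Fin N) (Fin N) ℂ)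
    (Y0 : Matrix (Fin M) (Fin N) ℂ) : Prop :=
  V.IsHermitian ∧ (Matrix.fromBlocks V Y0ᴴ Y0 (Toep v)).PosSemidef ∧ (Toep v).PosSemidef

/-!
Substituting u = v / √N and U = √N V + λ⁻¹ ZᴴZ with Z = Y − Y₀ turns an ANM point into a SPARROW
point with the same objective: the SPARROW block matrix is the sum of the ANM block, rescaled by the
congruence diag(N^{1/4}, N^{-1/4}), and the PSD block [[λ⁻¹ZᴴZ, Zᴴ], [Z, λI]], and Tr(ZᴴZ) = ‖Z‖_F².
Conversely, for a SPARROW point put D = Toep u + λI, X = D⁻¹Y, Y₀ = Toep(u) X and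
V = XᴴToep(u)X / √N. Then Y − Y₀ = λX, so the ANM objective is
(λ/2) Tr(YᴴD⁻¹Y) + (λN/2M) Tr Toep(u), and the Schur complement of the SPARROW constraint gives
Tr(YᴴD⁻¹Y) ≤ Tr U. Each problem is therefore dominated by the other.
-/

open Matrix

theorem Toep_real_smul {M : ℕ} (r : ℝ) (u : Fin M → ℂ) :
    Toep ((r : ℂ) • u) = (r : ℂ) • Toep u := by
  ext i j
  simp only [Toep, of_apply, Pi.smul_apply, smul_eq_mul, Matrix.smul_apply]
  split_ifs
  · rfl
  · rw [star_mul', Complex.star_def, Complex.conj_ofReal]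

theorem frobSq_eq_re_trace {m n : Type*} [Fintype m] [Fintype n] (X : Matrix m n ℂ) :
    frobSq X = (Xᴴ * X).trace.re := by
  simp only [frobSq, trace, diag, mul_apply, conjTranspose_apply, Complex.re_sum,
    Complex.star_def, Complex.conj_mul', ← Complex.ofReal_pow, Complex.ofReal_re]
  exact Finset.sum_comm

theorem frobSq_real_smul {m n : Type*} [Fintype m] [Fintype n] (r : ℝ) (X : Matrix m n ℂ) :
    frobSq ((r : ℂ) • X) = r ^ 2 * frobSq X := by
  simp only [frobSq, Matrix.smul_apply, smul_eq_mul, norm_mul, Complex.norm_real, mul_pow,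
    ← Finset.mul_sum, Real.norm_eq_abs, sq_abs]

theorem Matrix.PosSemidef.re_trace_nonneg_s18 {n : Type*} [Fintype n] {A : Matrix n n ℂ}
    (hA : A.PosSemidef) : 0 ≤ A.trace.re :=
  (Complex.nonneg_iff.mp hA.trace_nonneg).1

theorem Matrix.PosSemidef.real_smul {n : Type*} [Fintype n] {A : Matrix n n ℂ}
    (hA : A.PosSemidef) {r : ℝ} (hr : 0 ≤ r) : ((r : ℂ) • A).PosSemidef :=
  hA.smul (Complex.zero_le_real.mpr hr)

theorem Matrix.PosSemidef.fromBlocks_conjTranspose_mul_mul {m n : Type*} [Fintype m] [Fintype n]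
    [DecidableEq m] {T : Matrix m m ℂ} (hT : T.PosSemidef) (X : Matrix m n ℂ) :
    (fromBlocks (Xᴴ * T * X) (Xᴴ * T) (T * X) T).PosSemidef := by
  have h := hT.conjTranspose_mul_mul_same (fromCols X (1 : Matrix m m ℂ))
  rw [conjTranspose_fromCols_eq_fromRows_conjTranspose, fromRows_mul, fromRows_mul_fromCols] at h
  simpa only [conjTranspose_one, Matrix.one_mul, Matrix.mul_one] using h

theorem Matrix.PosSemidef.fromBlocks_smul_inv_smul {m n : Type*} [Fintype m] [Fintype n]
    [DecidableEq m] [DecidableEq n] {A : Matrix m m ℂ} {B : Matrix m n ℂ} {C : Matrix n m ℂ}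
    {D : Matrix n n ℂ} (h : (fromBlocks A B C D).PosSemidef) {c : ℝ} (hc : 0 < c) :
    (fromBlocks ((c : ℂ) • A) B C ((c : ℂ)⁻¹ • D)).PosSemidef := by
  obtain ⟨r, hr, hcr⟩ : ∃ r : ℝ, r ≠ 0 ∧ (c : ℂ) = r * r :=
    ⟨√c, (Real.sqrt_pos.mpr hc).ne', by rw [← Complex.ofReal_mul, Real.mul_self_sqrt hc.le]⟩
  convert h.conjTranspose_mul_mul_same
    (fromBlocks ((r : ℂ) • 1 : Matrix m m ℂ) 0 0 ((r : ℂ)⁻¹ • 1 : Matrix n n ℂ)) using 1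
  simp only [fromBlocks_conjTranspose, fromBlocks_multiply, conjTranspose_smul,
    conjTranspose_zero, conjTranspose_one, smul_mul, Matrix.mul_smul, Matrix.mul_zero,
    Matrix.zero_mul, Matrix.mul_one, Matrix.one_mul, add_zero, zero_add, smul_smul, star_inv₀,
    Complex.star_def, Complex.conj_ofReal, hcr, mul_inv, one_smul,
    inv_mul_cancel₀ (Complex.ofReal_ne_zero.mpr hr),
    mul_inv_cancel₀ (Complex.ofReal_ne_zero.mpr hr)]

theorem Matrix.PosSemidef.fromBlocks_inv_smul_conjTranspose_mul_mul {m n : Type*} [Fintype m]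
    [Fintype n] [DecidableEq m] [DecidableEq n] {T : Matrix m m ℂ} (hT : T.PosSemidef)
    (X : Matrix m n ℂ) {c : ℝ} (hc : 0 < c) :
    (fromBlocks ((c : ℂ)⁻¹ • (Xᴴ * T * X)) (Xᴴ * T) (T * X) ((c : ℂ) • T)).PosSemidef := by
  simpa using (hT.fromBlocks_conjTranspose_mul_mul X).fromBlocks_smul_inv_smul (inv_pos.mpr hc)

theorem Matrix.PosSemidef.toBlocks₁₁ {R m n : Type*} [Ring R] [PartialOrder R] [StarRing R]
    [Fintype m] [Fintype n] {A : Matrix (m ⊕ n) (m ⊕ n) R} (hA : A.PosSemidef) :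
    A.toBlocks₁₁.PosSemidef :=
  hA.submatrix Sum.inl

theorem Matrix.PosDef.re_trace_conjTranspose_mul_inv_mul_le {m n : Type*} [Fintype m]
    [Fintype n] [DecidableEq n] {A : Matrix m m ℂ} {B : Matrix n m ℂ} {D : Matrix n n ℂ}
    (hD : D.PosDef) (h : (fromBlocks A Bᴴ B D).PosSemidef) :
    (Bᴴ * D⁻¹ * B).trace.re ≤ A.trace.re := by
  have := hD.isUnit.invertible
  have hSchur := (PosDef.fromBlocks₂₂ A Bᴴ hD).mp (by rwa [conjTranspose_conjTranspose])
  rw [conjTranspose_conjTranspose] at hSchur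
  simpa [trace_sub] using hSchur.re_trace_nonneg_s18

section Equivalence

variable {M N : ℕ} {Y : Matrix (Fin M) (Fin N) ℂ} {lam : ℝ}

theorem glSparrowFeas_of_posSemidef {u : Fin M → ℂ} {U : Matrix (Fin N) (Fin N) ℂ}
    (hU : (fromBlocks U Yᴴ Y (Toep u + (lam : ℂ) • 1)).PosSemidef) (hu : (Toep u).PosSemidef) :
    glSparrowFeas Y lam u U :=
  ⟨by simpa using hU.toBlocks₁₁.isHermitian, hU, hu⟩

theorem anmFeas_of_posSemidef {v : Fin M → ℂ} {V : Matrix (Fin N) (Fin N) ℂ}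
    {Y0 : Matrix (Fin M) (Fin N) ℂ} (hV : (fromBlocks V Y0ᴴ Y0 (Toep v)).PosSemidef)
    (hv : (Toep v).PosSemidef) : anmFeas v V Y0 :=
  ⟨by simpa using hV.toBlocks₁₁.isHermitian, hV, hv⟩

theorem glSparrowObj_nonneg (hlam : 0 ≤ lam) {u : Fin M → ℂ} {U : Matrix (Fin N) (Fin N) ℂ}
    (h : glSparrowFeas Y lam u U) : 0 ≤ glSparrowObj lam u U := by
  have hU : U.PosSemidef := by simpa using h.2.1.toBlocks₁₁
  have := hU.re_trace_nonneg_s18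
  have := h.2.2.re_trace_nonneg_s18
  unfold glSparrowObj
  positivity

theorem glSparrowFeas_of_anmFeas (hN : 0 < N) (hlam : 0 < lam) {v : Fin M → ℂ}
    {V : Matrix (Fin N) (Fin N) ℂ} {Y0 : Matrix (Fin M) (Fin N) ℂ} (h : anmFeas v V Y0) :
    glSparrowFeas Y lam ((√N : ℂ)⁻¹ • v)
      ((√N : ℂ) • V + (lam : ℂ)⁻¹ • ((Y - Y0)ᴴ * (Y - Y0))) := by
  have hc : 0 < √(N : ℝ) := Real.sqrt_pos.mpr (Nat.cast_pos.mpr hN)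
  have hToep : Toep ((√N : ℂ)⁻¹ • v) = (√N : ℂ)⁻¹ • Toep v := by
    rw [← Complex.ofReal_inv, Toep_real_smul]
  have hres : (fromBlocks ((lam : ℂ)⁻¹ • ((Y - Y0)ᴴ * (Y - Y0))) (Y - Y0)ᴴ (Y - Y0)
      ((lam : ℂ) • 1)).PosSemidef := by
    simpa using PosSemidef.one.fromBlocks_inv_smul_conjTranspose_mul_mul (Y - Y0) hlam
  have hsplit : fromBlocks ((√N : ℂ) • V + (lam : ℂ)⁻¹ • ((Y - Y0)ᴴ * (Y - Y0))) Yᴴ Y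
      (Toep ((√N : ℂ)⁻¹ • v) + (lam : ℂ) • 1) =
      fromBlocks ((√N : ℂ) • V) Y0ᴴ Y0 ((√N : ℂ)⁻¹ • Toep v) +
        fromBlocks ((lam : ℂ)⁻¹ • ((Y - Y0)ᴴ * (Y - Y0))) (Y - Y0)ᴴ (Y - Y0) ((lam : ℂ) • 1) := by
    rw [fromBlocks_add, ← conjTranspose_add, add_sub_cancel, hToep]
  refine glSparrowFeas_of_posSemidef ?_ ?_
  · rw [hsplit]
    exact (h.2.1.fromBlocks_smul_inv_smul hc).add hres
  · rw [hToep, ← Complex.ofReal_inv]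
    exact h.2.2.real_smul (inv_nonneg.mpr hc.le)

theorem glSparrowObj_inv_sqrt_smul_eq_anmObj (hN : 0 < N) (hlam : 0 < lam) (v : Fin M → ℂ)
    (V : Matrix (Fin N) (Fin N) ℂ) (Y0 : Matrix (Fin M) (Fin N) ℂ) :
    glSparrowObj lam ((√N : ℂ)⁻¹ • v) ((√N : ℂ) • V + (lam : ℂ)⁻¹ • ((Y - Y0)ᴴ * (Y - Y0))) =
      anmObj Y lam v V Y0 := by
  rw [glSparrowObj, anmObj, ← Complex.ofReal_inv, ← Complex.ofReal_inv, Toep_real_smul,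
    trace_add, trace_smul, trace_smul, trace_smul, frobSq_eq_re_trace]
  simp only [smul_eq_mul, Complex.add_re, Complex.re_ofReal_mul]
  have hc : 0 < √(N : ℝ) := Real.sqrt_pos.mpr (Nat.cast_pos.mpr hN)
  set c := √(N : ℝ)
  rw [show (N : ℝ) = c * c from (Real.mul_self_sqrt (Nat.cast_nonneg N)).symm]
  field_simp
  ring

theorem anmObj_sqrt_smul_eq (hN : 0 < N) {u : Fin M → ℂ} {X : Matrix (Fin M) (Fin N) ℂ}
    (hY : Y = (Toep u + (lam : ℂ) • 1) * X) :
    anmObj Y lam ((√N : ℂ) • u) ((√N : ℂ)⁻¹ • (Xᴴ * Toep u * X)) (Toep u * X) =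
      lam / 2 * (Xᴴ * Y).trace.re + lam * N / 2 * (1 / M * (Toep u).trace.re) := by
  have hres : Y - Toep u * X = (lam : ℂ) • X := by
    rw [hY, Matrix.add_mul, smul_mul, Matrix.one_mul, add_sub_cancel_left]
  have hgram : Xᴴ * Y = Xᴴ * Toep u * X + (lam : ℂ) • (Xᴴ * X) := by
    rw [hY, ← Matrix.mul_assoc, Matrix.mul_add, Matrix.add_mul, Matrix.mul_smul, Matrix.mul_one,
      smul_mul]
  rw [anmObj, hres, hgram, frobSq_real_smul, frobSq_eq_re_trace, ← Complex.ofReal_inv,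
    Toep_real_smul, trace_add, trace_smul, trace_smul, trace_smul]
  simp only [smul_eq_mul, Complex.add_re, Complex.re_ofReal_mul]
  have hc : 0 < √(N : ℝ) := Real.sqrt_pos.mpr (Nat.cast_pos.mpr hN)
  set c := √(N : ℝ)
  rw [show (N : ℝ) = c * c from (Real.mul_self_sqrt (Nat.cast_nonneg N)).symm]
  field_simp
  ring

theorem exists_anmFeas_anmObj_le (hN : 0 < N) (hlam : 0 < lam) {u : Fin M → ℂ}
    {U : Matrix (Fin N) (Fin N) ℂ} (h : glSparrowFeas Y lam u U) :
    ∃ (V : Matrix (Fin N) (Fin N) ℂ) (Y0 : Matrix (Fin M) (Fin N) ℂ),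
      anmFeas ((√N : ℂ) • u) V Y0 ∧ anmObj Y lam ((√N : ℂ) • u) V Y0 ≤ glSparrowObj lam u U := by
  have hobj : glSparrowObj lam u U =
      lam / 2 * U.trace.re + lam * N / 2 * (1 / M * (Toep u).trace.re) := by
    rw [glSparrowObj]
    field_simp
  have hc : 0 < √(N : ℝ) := Real.sqrt_pos.mpr (Nat.cast_pos.mpr hN)
  set T := Toep u
  have hT : T.PosSemidef := h.2.2
  have hD : (T + (lam : ℂ) • 1).PosDef :=
    PosDef.posSemidef_add hT (PosDef.one.smul (Complex.zero_lt_real.mpr hlam))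
  set X := (T + (lam : ℂ) • 1)⁻¹ * Y
  have hY : Y = (T + (lam : ℂ) • 1) * X :=
    (mul_nonsing_inv_cancel_left _ _ ((isUnit_iff_isUnit_det _).mp hD.isUnit)).symm
  have hgram : Xᴴ * Y = Yᴴ * (T + (lam : ℂ) • 1)⁻¹ * Y := by
    rw [conjTranspose_mul, hD.isHermitian.inv.eq, Matrix.mul_assoc]
  have hTsmul : Toep ((√N : ℂ) • u) = (√N : ℂ) • T := Toep_real_smul _ u
  refine ⟨(√N : ℂ)⁻¹ • (Xᴴ * T * X), T * X, anmFeas_of_posSemidef ?_ ?_, ?_⟩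
  · rw [hTsmul, conjTranspose_mul T X, hT.isHermitian.eq]
    exact hT.fromBlocks_inv_smul_conjTranspose_mul_mul X hc
  · rw [hTsmul]
    exact hT.real_smul hc.le
  · have hle : (Xᴴ * Y).trace.re ≤ U.trace.re :=
      hgram ▸ hD.re_trace_conjTranspose_mul_inv_mul_le h.2.1
    rw [anmObj_sqrt_smul_eq hN hY, hobj]
    gcongr

variable (Y lam) in
def glSparrowValues : Set ℝ :=
  {r | ∃ (u : Fin M → ℂ) (U : Matrix (Fin N) (Fin N) ℂ),
    glSparrowFeas Y lam u U ∧ r = glSparrowObj lam u U}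

variable (Y lam) in
def anmValues : Set ℝ :=
  {r | ∃ (v : Fin M → ℂ) (V : Matrix (Fin N) (Fin N) ℂ) (Y0 : Matrix (Fin M) (Fin N) ℂ),
    anmFeas v V Y0 ∧ r = anmObj Y lam v V Y0}

theorem bddBelow_anmValues (hN : 0 < N) (hlam : 0 < lam) : BddBelow (anmValues Y lam) := by
  refine ⟨0, ?_⟩
  rintro _ ⟨v, V, Y0, h, rfl⟩
  rw [← glSparrowObj_inv_sqrt_smul_eq_anmObj hN hlam]
  exact glSparrowObj_nonneg hlam.le (glSparrowFeas_of_anmFeas hN hlam h)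

theorem sInf_glSparrowValues_eq (hN : 0 < N) (hlam : 0 < lam) :
    sInf (glSparrowValues Y lam) = sInf (anmValues Y lam) := by
  refine csInf_eq_csInf_of_forall_exists_le ?_ ?_
  · rintro _ ⟨u, U, h, rfl⟩
    obtain ⟨V, Y0, h', hle⟩ := exists_anmFeas_anmObj_le hN hlam h
    exact ⟨_, ⟨_, V, Y0, h', rfl⟩, hle⟩
  · rintro _ ⟨v, V, Y0, h, rfl⟩
    exact ⟨_, ⟨_, _, glSparrowFeas_of_anmFeas hN hlam h, rfl⟩,
      (glSparrowObj_inv_sqrt_smul_eq_anmObj hN hlam v V Y0).le⟩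

end Equivalence

theorem gl_sparrow_anm_equivalence_general (M N : ℕ) (hN : 0 < N)
    (Y : Matrix (Fin M) (Fin N) ℂ) (lam : ℝ) (hlam : 0 < lam) :
    sInf {r : ℝ | ∃ (u : Fin M → ℂ) (U : Matrix (Fin N) (Fin N) ℂ),
        glSparrowFeas Y lam u U ∧ r = glSparrowObj lam u U} =
      sInf {r : ℝ | ∃ (v : Fin M → ℂ) (V : Matrix (Fin N) (Fin N) ℂ)
          (Y0 : Matrix (Fin M) (Fin N) ℂ),
        anmFeas v V Y0 ∧ r = anmObj Y lam v V Y0} ∧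
    (∀ (v : Fin M → ℂ) (V : Matrix (Fin N) (Fin N) ℂ) (Y0 : Matrix (Fin M) (Fin N) ℂ),
      anmFeas v V Y0 →
      anmObj Y lam v V Y0 =
        sInf {r : ℝ | ∃ (v' : Fin M → ℂ) (V' : Matrix (Fin N) (Fin N) ℂ)
            (Y0' : Matrix (Fin M) (Fin N) ℂ),
          anmFeas v' V' Y0' ∧ r = anmObj Y lam v' V' Y0'} →
      ∃ U : Matrix (Fin N) (Fin N) ℂ,
        glSparrowFeas Y lam (((Real.sqrt N : ℂ))⁻¹ • v) U ∧
        glSparrowObj lam (((Real.sqrt N : ℂ))⁻¹ • v) U =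
          sInf {r : ℝ | ∃ (u : Fin M → ℂ) (U' : Matrix (Fin N) (Fin N) ℂ),
            glSparrowFeas Y lam u U' ∧ r = glSparrowObj lam u U'}) ∧
    (∀ (u : Fin M → ℂ) (U : Matrix (Fin N) (Fin N) ℂ),
      glSparrowFeas Y lam u U →
      glSparrowObj lam u U =
        sInf {r : ℝ | ∃ (u' : Fin M → ℂ) (U' : Matrix (Fin N) (Fin N) ℂ),
          glSparrowFeas Y lam u' U' ∧ r = glSparrowObj lam u' U'} →
      ∃ (V : Matrix (Fin N) (Fin N) ℂ) (Y0 : Matrix (Fin M) (Fin N) ℂ),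
        anmFeas ((Real.sqrt N : ℂ) • u) V Y0 ∧
        anmObj Y lam ((Real.sqrt N : ℂ) • u) V Y0 =
          sInf {r : ℝ | ∃ (v' : Fin M → ℂ) (V' : Matrix (Fin N) (Fin N) ℂ)
              (Y0' : Matrix (Fin M) (Fin N) ℂ),
            anmFeas v' V' Y0' ∧ r = anmObj Y lam v' V' Y0'}) := by
  have hval := sInf_glSparrowValues_eq (Y := Y) hN hlam
  refine ⟨hval, fun v V Y0 h hopt => ?_, fun u U h hopt => ?_⟩
  · exact ⟨_, glSparrowFeas_of_anmFeas hN hlam h,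
      (glSparrowObj_inv_sqrt_smul_eq_anmObj hN hlam v V Y0).trans (hopt.trans hval.symm)⟩
  · obtain ⟨V, Y0, h', hle⟩ := exists_anmFeas_anmObj_le hN hlam h
    exact ⟨V, Y0, h', le_antisymm (hle.trans (hopt.trans hval).le)
      (csInf_le (bddBelow_anmValues hN hlam) ⟨_, _, _, h', rfl⟩)⟩

/-- The gridless SPARROW SDP (with objective scaled by λN/2) and the MMV
atomic-norm SDP have the same optimal value, and optimal solutions are related by
u* = v*/√N. -/
theorem gl_sparrow_anm_equivalence (M N : ℕ) (hM : 0 < M) (hN : 0 < N)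
    (Y : Matrix (Fin M) (Fin N) ℂ) (lam : ℝ) (hlam : 0 < lam) :
    sInf {r : ℝ | ∃ (u : Fin M → ℂ) (U : Matrix (Fin N) (Fin N) ℂ),
        glSparrowFeas Y lam u U ∧ r = glSparrowObj lam u U} =
      sInf {r : ℝ | ∃ (v : Fin M → ℂ) (V : Matrix (Fin N) (Fin N) ℂ)
          (Y0 : Matrix (Fin M) (Fin N) ℂ),
        anmFeas v V Y0 ∧ r = anmObj Y lam v V Y0} ∧
    (∀ (v : Fin M → ℂ) (V : Matrix (Fin N) (Fin N) ℂ) (Y0 : Matrix (Fin M) (Fin N) ℂ),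
      anmFeas v V Y0 →
      anmObj Y lam v V Y0 =
        sInf {r : ℝ | ∃ (v' : Fin M → ℂ) (V' : Matrix (Fin N) (Fin N) ℂ)
            (Y0' : Matrix (Fin M) (Fin N) ℂ),
          anmFeas v' V' Y0' ∧ r = anmObj Y lam v' V' Y0'} →
      ∃ U : Matrix (Fin N) (Fin N) ℂ,
        glSparrowFeas Y lam (((Real.sqrt N : ℂ))⁻¹ • v) U ∧
        glSparrowObj lam (((Real.sqrt N : ℂ))⁻¹ • v) U =
          sInf {r : ℝ | ∃ (u : Fin M → ℂ) (U' : Matrix (Fin N) (Fin N) ℂ),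
            glSparrowFeas Y lam u U' ∧ r = glSparrowObj lam u U'}) ∧
    (∀ (u : Fin M → ℂ) (U : Matrix (Fin N) (Fin N) ℂ),
      glSparrowFeas Y lam u U →
      glSparrowObj lam u U =
        sInf {r : ℝ | ∃ (u' : Fin M → ℂ) (U' : Matrix (Fin N) (Fin N) ℂ),
          glSparrowFeas Y lam u' U' ∧ r = glSparrowObj lam u' U'} →
      ∃ (V : Matrix (Fin N) (Fin N) ℂ) (Y0 : Matrix (Fin M) (Fin N) ℂ),
        anmFeas ((Real.sqrt N : ℂ) • u) V Y0 ∧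
        anmObj Y lam ((Real.sqrt N : ℂ) • u) V Y0 =
          sInf {r : ℝ | ∃ (v' : Fin M → ℂ) (V' : Matrix (Fin N) (Fin N) ℂ)
              (Y0' : Matrix (Fin M) (Fin N) ℂ),
            anmFeas v' V' Y0' ∧ r = anmObj Y lam v' V' Y0'}) :=
  gl_sparrow_anm_equivalence_general M N hN Y lam hlam
end
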